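/- arXiv:1612.08884 — 4 statements merged into one kernel-verified Lean document; each statement's English description precedes it below -/
import Mathlib

section
/- Every middleman in an undirected network is a strong middleman: if D is a network on node set N such that (i,j) ∈ D if and only if (j,i) ∈ D, then for every middleman h ∈ M(D) the reduced network D − h is not weakly connected. -/
open Finset

variable {V : Type*} [Fintype V] [DecidableEq V]

/-- The arc set is irreflexive: no loops. -/
def IrreflArcs (D : Finset (V × V)) : Prop := ∀ i : V, (i, i) ∉ D

/-- `l` is an `(i,j)`-path in `D`: a list of pairwise distinct nodes, of length at
least 2, starting at `i`, ending at `j`, consecutive nodes joined by arcs of `D`. -/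
def IsPath (D : Finset (V × V)) (i j : V) (l : List V) : Prop :=
  l.Nodup ∧ l.Chain' (fun a b => (a, b) ∈ D) ∧
    l.head? = some i ∧ l.getLast? = some j ∧ 2 ≤ l.length

/-- Node `i` is connected to node `j`: there is at least one `(i,j)`-path. -/
def Conn (D : Finset (V × V)) (i j : V) : Prop := ∃ l : List V, IsPath D i j l

/-- The direct successors `s_i(D)`. -/
def dsucc (D : Finset (V × V)) (i : V) : Finset V := univ.filter fun j => (i, j) ∈ D

/-- The direct predecessors `p_i(D)`. -/
def dpred (D : Finset (V × V)) (i : V) : Finset V := univ.filter fun j => (j, i) ∈ D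

open scoped Classical in
/-- The successor set `S_i(D)`: all nodes to which `i` is connected. -/
noncomputable def succC (D : Finset (V × V)) (i : V) : Finset V :=
  univ.filter fun j => Conn D i j

open scoped Classical in
/-- The predecessor set `P_i(D)`: all nodes that are connected to `i`. -/
noncomputable def predC (D : Finset (V × V)) (i : V) : Finset V :=
  univ.filter fun j => Conn D j i

/-- An intermediary: at least one direct predecessor, at least one direct successor,
and at least two distinct direct neighbours. -/
def Intermediary (D : Finset (V × V)) (i : V) : Prop :=
  (dpred D i).Nonempty ∧ (dsucc D i).Nonempty ∧ 2 ≤ (dsucc D i ∪ dpred D i).card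

/-- The induced subnetwork `D_M` on a node set `M`. -/
def inducedOn (D : Finset (V × V)) (M : Finset V) : Finset (V × V) :=
  D.filter fun e => e.1 ∈ M ∧ e.2 ∈ M

/-- The reduced network `D − i`. -/
def removeNode (D : Finset (V × V)) (i : V) : Finset (V × V) :=
  D.filter fun e => e.1 ≠ i ∧ e.2 ≠ i

/-- The reduced network `D − C`, removing a node set `C`. -/
def removeNodes (D : Finset (V × V)) (C : Finset V) : Finset (V × V) :=
  D.filter fun e => e.1 ∉ C ∧ e.2 ∉ C

/-- `h` is an `(i,j)`-middleman: `i ≠ j`, `h ∉ {i,j}`, there is at least one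
`(i,j)`-path, and `h` lies on every `(i,j)`-path. -/
def MmBetween (D : Finset (V × V)) (h i j : V) : Prop :=
  i ≠ j ∧ h ≠ i ∧ h ≠ j ∧ Conn D i j ∧ ∀ l : List V, IsPath D i j l → h ∈ l

/-- `h` is a middleman: an intermediary that is an `(i,j)`-middleman for some pair. -/
def IsMiddleman (D : Finset (V × V)) (h : V) : Prop :=
  Intermediary D h ∧ ∃ i j : V, MmBetween D h i j

/-- The network is weakly connected. -/
def WeakConn (D : Finset (V × V)) : Prop :=
  ∀ i j : V, i ≠ j → Conn D i j ∨ Conn D j i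

/-- The network `(M, D_M)` is weakly connected. -/
def WeakConnOn (D : Finset (V × V)) (M : Finset V) : Prop :=
  ∀ i ∈ M, ∀ j ∈ M, i ≠ j → Conn (inducedOn D M) i j ∨ Conn (inducedOn D M) j i

/-- The network is strongly connected. -/
def StrongConn (D : Finset (V × V)) : Prop :=
  ∀ i j : V, i ≠ j → Conn D i j

/-- `M` is a component of `D`. -/
def IsComponent (D : Finset (V × V)) (M : Finset V) : Prop :=
  WeakConnOn D M ∧ ∀ i ∉ M, ¬ WeakConnOn D (insert i M)

/-- The coverage `Γ_i(D)` of an intermediary `i`. -/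
noncomputable def coverage (D : Finset (V × V)) (i : V) : Finset (V × V) :=
  (predC D i ×ˢ succC D i).filter fun e => e.1 ≠ e.2

/-- The extended coverage `Γ̄_j(D)` of a node `j`. -/
noncomputable def extCoverage (D : Finset (V × V)) (j : V) : Finset (V × V) :=
  insert j (predC D j) ×ˢ insert j (succC D j)

/-- Intermediary `i` is contested by the node set `C ⊆ N \ {i}`. -/
def ContestedBy (D : Finset (V × V)) (i : V) (C : Finset V) : Prop :=
  i ∉ C ∧ coverage D i ⊆ C.biUnion fun j => extCoverage (removeNode D i) j

/-- The brokerage `b_i(D)`. -/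
noncomputable def brokerage (D : Finset (V × V)) (i : V) : ℤ :=
  (∑ j ∈ univ.erase i,
      (((succC D j).card : ℤ) - ((succC (removeNode D i) j).card : ℤ)))
    - ((predC D i).card : ℤ)

/-- The maximal potential brokerage `B(D)`. -/
noncomputable def maxBrokerage (D : Finset (V × V)) : ℤ :=
  ∑ i : V, (((succC D i).card : ℤ) - ((dsucc D i).card : ℤ))

/-- The middleman power measure `ν_i(D) = b_i(D) / max{B(D), 1}`. -/
noncomputable def power (D : Finset (V × V)) (i : V) : ℚ :=
  (brokerage D i : ℚ) / ((max (maxBrokerage D) 1 : ℤ) : ℚ)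

/-- The robustness `ρ_i(D)` of a middleman `i`. -/
noncomputable def robustness (D : Finset (V × V)) (i : V) : ℕ :=
  sInf {m : ℕ | ∃ D' : Finset (V × V),
      IrreflArcs D' ∧ D ⊂ D' ∧ ¬ IsMiddleman D' i ∧ D'.card = m} - D.card

/-- The dual robustness `ρ*_i(D)` of a middleman `i`. -/
noncomputable def dualRobustness (D : Finset (V × V)) (i : V) : ℕ :=
  D.card - sSup {m : ℕ | ∃ D' : Finset (V × V),
      D' ⊆ D ∧ ¬ IsMiddleman D' i ∧ D'.card = m}

/-- The node-robustness `ψ_i(D)` of a middleman `i`. -/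
noncomputable def nodeRobustness (D : Finset (V × V)) (i : V) : ℕ :=
  sInf {m : ℕ | ∃ C : Finset V,
      i ∉ C ∧ ¬ IsMiddleman (removeNodes D C) i ∧ C.card = m}

/-- Direct neighbours in the underlying undirected network. -/
def nbr (D : Finset (V × V)) (i : V) : Finset V := dsucc D i ∪ dpred D i

/-- The local clustering coefficient `C_i = 2 L_i / (d_i (d_i − 1))`, computed here as
the number of ordered adjacent pairs of neighbours divided by `d_i (d_i − 1)`. -/
def clustering (D : Finset (V × V)) (i : V) : ℚ :=
  (((nbr D i ×ˢ nbr D i).filter fun e =>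
      e.1 ≠ e.2 ∧ ((e.1, e.2) ∈ D ∨ (e.2, e.1) ∈ D)).card : ℚ)
    / (((nbr D i).card : ℚ) * (((nbr D i).card : ℚ) - 1))

/-
An undirected network has symmetric connectivity, so weak connectivity of `D − h` would give an
`(i,j)`-path avoiding `h` for every pair `i, j ≠ h`; this contradicts `h` being an
`(i,j)`-middleman.
-/

section Paths

variable {α : Type*} {D D' : Finset (α × α)} {i j : α} {l : List α}

lemma IsPath.mono (hsub : D ⊆ D') (hp : IsPath D i j l) : IsPath D' i j l := by
  obtain ⟨hnodup, hchain, hhead, hlast, hlen⟩ := hp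
  exact ⟨hnodup, hchain.imp fun _ _ hab => hsub hab, hhead, hlast, hlen⟩

lemma IsPath.reverse (hsym : ∀ a b : α, (a, b) ∈ D → (b, a) ∈ D) (hp : IsPath D i j l) :
    IsPath D j i l.reverse := by
  obtain ⟨hnodup, hchain, hhead, hlast, hlen⟩ := hp
  refine ⟨List.nodup_reverse.mpr hnodup, ?_, by rwa [List.head?_reverse],
    by rwa [List.getLast?_reverse], by simpa using hlen⟩
  exact List.isChain_reverse.mpr (hchain.imp fun a b => hsym a b)

lemma Conn.symm (hsym : ∀ a b : α, (a, b) ∈ D → (b, a) ∈ D) (h : Conn D i j) :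
    Conn D j i :=
  let ⟨l, hp⟩ := h
  ⟨l.reverse, hp.reverse hsym⟩

lemma IsPath.mem_of_inducedOn [DecidableEq α] {M : Finset α} (hp : IsPath (inducedOn D M) i j l)
    (hi : i ∈ M) : ∀ x ∈ l, x ∈ M := by
  obtain ⟨-, hchain, hhead, -⟩ := hp
  refine List.IsChain.induction (· ∈ M) l hchain (fun _ _ hxy _ => (mem_filter.1 hxy).2.2) ?_
  intro hne
  rwa [Option.some_injective _ ((List.head?_eq_some_head hne).symm.trans hhead)]

lemma inducedOn_symm [DecidableEq α] (hsym : ∀ a b : α, (a, b) ∈ D → (b, a) ∈ D)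
    (M : Finset α) (a b : α) (hab : (a, b) ∈ inducedOn D M) : (b, a) ∈ inducedOn D M := by
  obtain ⟨hD, ha, hb⟩ := mem_filter.1 hab
  exact mem_filter.2 ⟨hsym a b hD, hb, ha⟩

lemma not_conn_inducedOn_erase_of_mmBetween [Fintype α] [DecidableEq α] {h : α}
    (hmm : MmBetween D h i j) : ¬ Conn (inducedOn D (univ.erase h)) i j := by
  obtain ⟨-, hhi, -, -, hall⟩ := hmm
  rintro ⟨l, hp⟩
  have hh := hp.mem_of_inducedOn (mem_erase.2 ⟨Ne.symm hhi, mem_univ i⟩) h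
    (hall l (hp.mono (filter_subset _ _)))
  exact (mem_erase.1 hh).1 rfl

end Paths

theorem statement6_general {V : Type*} [Fintype V] [DecidableEq V] (D : Finset (V × V))
    (hund : ∀ i j : V, (i, j) ∈ D ↔ (j, i) ∈ D) :
    ∀ h : V, IsMiddleman D h → ¬ WeakConnOn D (Finset.univ.erase h) := by
  rintro h ⟨-, i, j, hmm⟩ hweak
  have hi : i ∈ univ.erase h := mem_erase.2 ⟨Ne.symm hmm.2.1, mem_univ i⟩
  have hj : j ∈ univ.erase h := mem_erase.2 ⟨Ne.symm hmm.2.2.1, mem_univ j⟩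
  have hsym := inducedOn_symm (fun a b => (hund a b).1) (univ.erase h)
  rcases hweak i hi j hj hmm.1 with hij | hji
  · exact not_conn_inducedOn_erase_of_mmBetween hmm hij
  · exact not_conn_inducedOn_erase_of_mmBetween hmm (hji.symm hsym)

/-- Every middleman in an undirected network is a strong middleman: the reduced
network `D − h` is not weakly connected. -/
theorem statement6 {V : Type*} [Fintype V] [DecidableEq V] (D : Finset (V × V))
    (hirr : IrreflArcs D) (hund : ∀ i j : V, (i, j) ∈ D ↔ (j, i) ∈ D) :
    ∀ h : V, IsMiddleman D h → ¬ WeakConnOn D (Finset.univ.erase h) :=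
  statement6_general D hund
end

section
/- Let D be a directed network on node set N with #N ≥ 3. Every middleman i ∈ M(D) is an uncontested intermediary in D: there exists no node set C ⊆ N \ {i} that contests i. -/
open Finset

variable {V : Type*} [Fintype V] [DecidableEq V]

/-!
If `i` is an `(a,b)`-middleman, then `a` reaches `i` and `i` reaches `b`, so `(a,b)` lies in the
coverage of `i`. A node `j` whose extended coverage in `D − i` contains `(a,b)` would give a walk
`a ⇝ j ⇝ b` avoiding `i`, hence an `(a,b)`-path avoiding `i`, which is impossible.
-/

open Relation

abbrev Arc {V : Type*} (D : Finset (V × V)) (x y : V) : Prop := (x, y) ∈ D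

theorem List.exists_nodup_isChain_of_reflTransGen {α : Type*} {r : α → α → Prop} {a b : α}
    (h : ReflTransGen r a b) :
    ∃ l : List α, l.Nodup ∧ l.IsChain r ∧ l.head? = some a ∧ l.getLast? = some b := by
  classical
  induction h using ReflTransGen.head_induction_on with
  | refl => exact ⟨[b], List.nodup_singleton b, List.isChain_singleton b, rfl, rfl⟩
  | @head a c hac _ ih =>
    obtain ⟨l, hnd, hch, hhd, hlast⟩ := ih
    by_cases ha : a ∈ l
    · obtain ⟨l₁, l₂, rfl⟩ := List.append_of_mem ha
      refine ⟨a :: l₂, hnd.sublist (List.sublist_append_right _ _),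
        hch.suffix (List.suffix_append _ _), rfl, ?_⟩
      rwa [List.getLast?_append_cons] at hlast
    · obtain ⟨l', rfl⟩ : ∃ l', l = c :: l' := by
        cases l with
        | nil => simp at hhd
        | cons x l' => exact ⟨l', by simpa using hhd⟩
      exact ⟨a :: c :: l', List.nodup_cons.mpr ⟨ha, hnd⟩, hch.cons_cons hac, rfl,
        by simpa using hlast⟩

theorem List.two_le_length_of_head?_of_getLast? {α : Type*} {l : List α} {a b : α}
    (ha : l.head? = some a) (hb : l.getLast? = some b) (hab : a ≠ b) : 2 ≤ l.length := by
  match l with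
  | [] => simp at ha
  | [x] => simp_all
  | _ :: _ :: _ => simp

section Network

variable {V : Type*} {D D' : Finset (V × V)} {a b h x : V} {l : List V}

theorem IsPath.mono_s9 (hp : IsPath D' a b l) (hD : D' ⊆ D) : IsPath D a b l :=
  ⟨hp.1, List.IsChain.imp (fun _ _ hxy => hD hxy) hp.2.1, hp.2.2⟩

theorem IsPath.reflTransGen_of_mem (hp : IsPath D a b l) (hx : x ∈ l) :
    ReflTransGen (Arc D) a x ∧ ReflTransGen (Arc D) x b := by
  obtain ⟨-, hch, hhd, hlast, -⟩ := hp
  have hch : l.IsChain (Arc D) := hch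
  constructor
  · refine hch.induction (ReflTransGen (Arc D) a) l (fun _ _ hyz hy => hy.tail hyz) ?_ x hx
    exact fun hne => (List.head_eq_iff_head?_eq_some hne).mpr hhd ▸ .refl
  · refine hch.backwards_induction (ReflTransGen (Arc D) · b) l
      (fun _ _ hyz hz => hz.head hyz) ?_ x hx
    exact fun hne => List.getLast_of_mem_getLast? hlast ▸ .refl

theorem Conn.reflTransGen (h : Conn D a b) : ReflTransGen (Arc D) a b := by
  obtain ⟨l, hp⟩ := h
  exact (hp.reflTransGen_of_mem (List.mem_of_getLast? hp.2.2.2.1)).1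

theorem conn_of_reflTransGen (hab : a ≠ b) (h : ReflTransGen (Arc D) a b) : Conn D a b :=
  let ⟨l, hnd, hch, hhd, hlast⟩ := List.exists_nodup_isChain_of_reflTransGen h
  ⟨l, hnd, hch, hhd, hlast, List.two_le_length_of_head?_of_getLast? hhd hlast hab⟩

theorem not_reflTransGen_removeNode_self [DecidableEq V] (hhb : h ≠ b) :
    ¬ ReflTransGen (Arc (removeNode D h)) h b := by
  intro hr
  rcases hr.cases_head with rfl | ⟨c, hc, -⟩
  · exact hhb rfl
  · exact (mem_filter.mp hc).2.1 rfl

theorem MmBetween.not_reflTransGen_removeNode [DecidableEq V] (hm : MmBetween D h a b) :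
    ¬ ReflTransGen (Arc (removeNode D h)) a b := by
  obtain ⟨hab, -, hhb, -, hall⟩ := hm
  intro hr
  obtain ⟨l, hp⟩ := conn_of_reflTransGen hab hr
  have hhl : h ∈ l := hall l (hp.mono_s9 (filter_subset _ _))
  exact not_reflTransGen_removeNode_self hhb (hp.reflTransGen_of_mem hhl).2

variable [Fintype V] [DecidableEq V]

theorem MmBetween.mem_coverage (hm : MmBetween D h a b) : (a, b) ∈ coverage D h := by
  obtain ⟨hab, hha, hhb, ⟨l, hp⟩, hall⟩ := hm
  have hr := hp.reflTransGen_of_mem (hall l hp)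
  simp only [coverage, predC, succC, mem_filter, mem_product, mem_univ, true_and]
  exact ⟨⟨conn_of_reflTransGen (Ne.symm hha) hr.1, conn_of_reflTransGen hhb hr.2⟩, hab⟩

theorem reflTransGen_of_mem_extCoverage {j : V}
    (hx : (a, b) ∈ extCoverage D j) : ReflTransGen (Arc D) a j ∧ ReflTransGen (Arc D) j b := by
  have hreach : ∀ {x y : V}, x = y ∨ Conn D x y → ReflTransGen (Arc D) x y := by
    rintro x y (rfl | hxy)
    exacts [.refl, hxy.reflTransGen]
  simp only [extCoverage, predC, succC, mem_product, mem_insert, mem_filter, mem_univ,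
    true_and] at hx
  exact ⟨hreach hx.1, hreach (hx.2.imp Eq.symm id)⟩

end Network

theorem statement9_general {V : Type*} [Fintype V] [DecidableEq V] (D : Finset (V × V))
    (i : V) (hm : IsMiddleman D i) :
    ¬ ∃ C : Finset V, ContestedBy D i C := by
  rintro ⟨C, -, hcontest⟩
  obtain ⟨-, a, b, hmid⟩ := hm
  obtain ⟨j, -, hj⟩ := mem_biUnion.mp (hcontest hmid.mem_coverage)
  obtain ⟨haj, hjb⟩ := reflTransGen_of_mem_extCoverage hj
  exact hmid.not_reflTransGen_removeNode (haj.trans hjb)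

/-- Every middleman `i ∈ M(D)` is an uncontested intermediary in `D`: there exists no
node set `C ⊆ N \ {i}` that contests `i`. -/
theorem statement9 {V : Type*} [Fintype V] [DecidableEq V] (D : Finset (V × V))
    (hirr : IrreflArcs D) (hcard : 3 ≤ Fintype.card V)
    (i : V) (hm : IsMiddleman D i) :
    ¬ ∃ C : Finset V, ContestedBy D i C :=
  statement9_general D i hm
end

section
/- Let D be a directed network on node set N with #N ≥ 3. If an intermediary i is uncontested in D, then i is a middleman, i.e., i ∈ M(D). -/
open Finset

variable {V : Type*} [Fintype V] [DecidableEq V]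

/-!
If `i` is not a middleman, then for every pair `(h, j)` of its coverage (which is connected
through `i`) some `(h, j)`-path avoids `i`. That path survives in `D − i`, so `(h, j)` lies in the
extended coverage of `h` in `D − i`, and the set of all nodes other than `i` contests `i`.
-/

section Paths

variable {V : Type*} {D : Finset (V × V)}

theorem IsPath.ne {i j : V} {l : List V} (hl : IsPath D i j l) : i ≠ j := by
  obtain ⟨hnd, -, hhead, hlast, hlen⟩ := hl
  rcases l with _ | ⟨a, _ | ⟨b, t⟩⟩
  · simp at hlen
  · simp at hlen
  · simp only [List.head?_cons, Option.some.injEq] at hhead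
    subst hhead
    rw [List.getLast?_cons_cons] at hlast
    rintro rfl
    exact (List.nodup_cons.mp hnd).1 (List.mem_of_getLast? hlast)

theorem Conn.ne {i j : V} (h : Conn D i j) : i ≠ j :=
  h.elim fun _ hl => hl.ne

theorem IsPath.reflTransGen {i j : V} {l : List V} (hl : IsPath D i j l) :
    Relation.ReflTransGen (fun a b => (a, b) ∈ D) i j := by
  obtain ⟨-, hchain, hhead, hlast, -⟩ := hl
  have hne : l ≠ [] := by rintro rfl; simp at hhead
  convert List.relationReflTransGen_of_exists_isChain l hchain hne
  · exact (Option.some_injective _ ((List.head?_eq_some_head hne).symm.trans hhead)).symm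
  · exact (Option.some_injective _ ((List.getLast?_eq_some_getLast hne).symm.trans hlast)).symm

/-- If `a` already lies on the `(b, c)`-path, the new path starts at that occurrence instead. -/
theorem Conn.cons_arc {a b c : V} (hab : (a, b) ∈ D) (hbc : Conn D b c) (hac : a ≠ c) :
    Conn D a c := by
  obtain ⟨l, hnd, hchain, hhead, hlast, -⟩ := hbc
  by_cases hal : a ∈ l
  · obtain ⟨l₁, l₂, rfl⟩ := List.append_of_mem hal
    rw [List.getLast?_append_cons] at hlast
    refine ⟨a :: l₂, hnd.sublist (List.sublist_append_right _ _), hchain.suffix ⟨l₁, rfl⟩, rfl,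
      hlast, ?_⟩
    rcases l₂ with _ | ⟨d, t⟩
    · exact absurd (by simpa using hlast) hac
    · simp
  · rcases l with _ | ⟨b', t⟩
    · simp at hhead
    obtain rfl : b' = b := by simpa using hhead
    exact ⟨a :: b' :: t, List.nodup_cons.mpr ⟨hal, hnd⟩, List.isChain_cons_cons.mpr ⟨hab, hchain⟩,
      rfl, by rwa [List.getLast?_cons_cons], by simp⟩

theorem conn_of_reflTransGen_s10 {i j : V} (h : Relation.ReflTransGen (fun a b => (a, b) ∈ D) i j)
    (hne : i ≠ j) : Conn D i j := by
  induction h using Relation.ReflTransGen.head_induction_on with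
  | refl => exact absurd rfl hne
  | @head a b hab _ ih =>
    by_cases hbj : b = j
    · subst hbj
      exact ⟨[a, b], by simpa using hne, List.isChain_pair.mpr hab, rfl, rfl, le_rfl⟩
    · exact (ih hbj).cons_arc hab hne

theorem Conn.trans {i j k : V} (hij : Conn D i j) (hjk : Conn D j k) (hik : i ≠ k) :
    Conn D i k :=
  let ⟨_, hl⟩ := hij
  let ⟨_, hl'⟩ := hjk
  conn_of_reflTransGen_s10 (hl.reflTransGen.trans hl'.reflTransGen) hik

theorem IsPath.removeNode [DecidableEq V] {i j k : V} {l : List V} (hl : IsPath D i j l)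
    (hk : k ∉ l) : IsPath (removeNode D k) i j l := by
  obtain ⟨hnd, hchain, hhead, hlast, hlen⟩ := hl
  refine ⟨hnd, hchain.imp_of_mem_imp fun a b ha hb hab => ?_, hhead, hlast, hlen⟩
  simp only [_root_.removeNode, mem_filter]
  exact ⟨hab, fun h => hk (h ▸ ha), fun h => hk (h ▸ hb)⟩

end Paths

theorem contestedBy_univ_erase_of_forall_not_mmBetween {V : Type*} [Fintype V] [DecidableEq V]
    {D : Finset (V × V)} {i : V} (hi : ∀ h j, ¬ MmBetween D i h j) :
    ContestedBy D i (univ.erase i) := by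
  refine ⟨notMem_erase i _, ?_⟩
  rintro ⟨h, j⟩ hhj
  simp only [coverage, predC, succC, mem_filter, mem_product, mem_univ, true_and] at hhj
  obtain ⟨⟨hhi, hij⟩, hne⟩ := hhj
  have hav : ∃ l, IsPath D h j l ∧ i ∉ l := by
    simpa [MmBetween, hne, hhi.ne.symm, hij.ne, hhi.trans hij hne] using hi h j
  obtain ⟨l, hl, hil⟩ := hav
  simp only [mem_biUnion, extCoverage, mem_product, mem_insert, succC, mem_filter, mem_univ,
    true_and]
  exact ⟨h, mem_erase.mpr ⟨hhi.ne, mem_univ h⟩, Or.inl rfl, Or.inr ⟨l, hl.removeNode hil⟩⟩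

theorem statement10_general {V : Type*} [Fintype V] [DecidableEq V] (D : Finset (V × V))
    (i : V) (hi : Intermediary D i)
    (hu : ¬ ∃ C : Finset V, ContestedBy D i C) :
    IsMiddleman D i := by
  refine ⟨hi, ?_⟩
  by_contra! hm
  exact hu ⟨_, contestedBy_univ_erase_of_forall_not_mmBetween hm⟩

/-- If an intermediary `i` is uncontested in `D`, then `i` is a middleman. -/
theorem statement10 {V : Type*} [Fintype V] [DecidableEq V] (D : Finset (V × V))
    (hirr : IrreflArcs D) (hcard : 3 ≤ Fintype.card V)
    (i : V) (hi : Intermediary D i)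
    (hu : ¬ ∃ C : Finset V, ContestedBy D i C) :
    IsMiddleman D i :=
  statement10_general D i hi hu
end

section
/- Let D be a directed network on node set N and let i ∈ M(D) be a middleman in D. Then the dual robustness of i satisfies 1 ≤ ρ*_i(D) ≤ min{d⁺_i, d⁻_i}, where d⁺_i and d⁻_i are the out- and in-degree of i. -/
open Finset

variable {V : Type*} [Fintype V] [DecidableEq V]

/-!
Deleting a middleman's outgoing arcs (or its incoming arcs) leaves it without direct successors
(predecessors), hence not an intermediary; this bounds `ρ*_i(D)` by `d⁺_i` and by `d⁻_i`.
Conversely every arc set witnessing the supremum is a proper subset of `D`, since `i` is still a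
middleman in `D` itself, so at least one arc must be deleted.
-/

section DualRobustness

variable {D D' : Finset (V × V)} {i : V}

lemma IsMiddleman.dsucc_nonempty (h : IsMiddleman D i) : (dsucc D i).Nonempty := h.1.2.1

lemma IsMiddleman.dpred_nonempty (h : IsMiddleman D i) : (dpred D i).Nonempty := h.1.1

lemma filter_fst_eq_eq_map_dsucc (D : Finset (V × V)) (i : V) :
    D.filter (·.1 = i) = (dsucc D i).map ⟨Prod.mk i, Prod.mk_right_injective i⟩ := by
  ext ⟨a, b⟩
  simp only [mem_filter, mem_map, dsucc, mem_univ, true_and, Function.Embedding.coeFn_mk,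
    Prod.mk.injEq]
  constructor
  · rintro ⟨hab, rfl⟩
    exact ⟨b, hab, rfl, rfl⟩
  · rintro ⟨b, hab, rfl, rfl⟩
    exact ⟨hab, rfl⟩

lemma filter_snd_eq_eq_map_dpred (D : Finset (V × V)) (i : V) :
    D.filter (·.2 = i) = (dpred D i).map ⟨(·, i), Prod.mk_left_injective i⟩ := by
  ext ⟨a, b⟩
  simp only [mem_filter, mem_map, dpred, mem_univ, true_and, Function.Embedding.coeFn_mk,
    Prod.mk.injEq]
  constructor
  · rintro ⟨hab, rfl⟩
    exact ⟨a, hab, rfl, rfl⟩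
  · rintro ⟨a, hab, rfl, rfl⟩
    exact ⟨hab, rfl⟩

lemma card_filter_fst_ne (D : Finset (V × V)) (i : V) :
    #(D.filter (·.1 ≠ i)) = #D - #(dsucc D i) := by
  have hsplit := card_filter_add_card_filter_not (s := D) (p := (·.1 = i))
  rw [filter_fst_eq_eq_map_dsucc, card_map] at hsplit
  simp only [ne_eq]
  omega

lemma card_filter_snd_ne (D : Finset (V × V)) (i : V) :
    #(D.filter (·.2 ≠ i)) = #D - #(dpred D i) := by
  have hsplit := card_filter_add_card_filter_not (s := D) (p := (·.2 = i))
  rw [filter_snd_eq_eq_map_dpred, card_map] at hsplit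
  simp only [ne_eq]
  omega

lemma not_isMiddleman_filter_fst_ne (D : Finset (V × V)) (i : V) :
    ¬ IsMiddleman (D.filter (·.1 ≠ i)) i := fun h => by
  simpa [dsucc] using h.dsucc_nonempty

lemma not_isMiddleman_filter_snd_ne (D : Finset (V × V)) (i : V) :
    ¬ IsMiddleman (D.filter (·.2 ≠ i)) i := fun h => by
  simpa [dpred] using h.dpred_nonempty

def nonMiddlemanSizes (D : Finset (V × V)) (i : V) : Set ℕ :=
  {m : ℕ | ∃ D' : Finset (V × V), D' ⊆ D ∧ ¬ IsMiddleman D' i ∧ #D' = m}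

lemma dualRobustness_eq_card_sub_sSup (D : Finset (V × V)) (i : V) :
    dualRobustness D i = #D - sSup (nonMiddlemanSizes D i) := rfl

lemma bddAbove_nonMiddlemanSizes (D : Finset (V × V)) (i : V) :
    BddAbove (nonMiddlemanSizes D i) := by
  refine ⟨#D, ?_⟩
  rintro m ⟨D', hD', -, rfl⟩
  exact card_le_card hD'

lemma dualRobustness_le_card_sub (hD' : D' ⊆ D) (hD'i : ¬ IsMiddleman D' i) :
    dualRobustness D i ≤ #D - #D' :=
  Nat.sub_le_sub_left (le_csSup (bddAbove_nonMiddlemanSizes D i) ⟨D', hD', hD'i, rfl⟩) _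

lemma exists_dualRobustness_eq (D : Finset (V × V)) (i : V) :
    ∃ D' ⊆ D, ¬ IsMiddleman D' i ∧ dualRobustness D i = #D - #D' := by
  have hempty : ¬ IsMiddleman (∅ : Finset (V × V)) i := fun h => by
    simpa [dsucc] using h.dsucc_nonempty
  obtain ⟨D', hD', hD'i, hcard⟩ :=
    Nat.sSup_mem (s := nonMiddlemanSizes D i) ⟨0, ∅, empty_subset D, hempty, card_empty⟩
      (bddAbove_nonMiddlemanSizes D i)
  exact ⟨D', hD', hD'i, by rw [dualRobustness_eq_card_sub_sSup, ← hcard]⟩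

lemma IsMiddleman.one_le_dualRobustness (hm : IsMiddleman D i) : 1 ≤ dualRobustness D i := by
  obtain ⟨D', hD', hD'i, hρ⟩ := exists_dualRobustness_eq D i
  have hssub : D' ⊂ D := hD'.ssubset_of_ne (by rintro rfl; exact hD'i hm)
  have := card_lt_card hssub
  omega

lemma dualRobustness_le_card_dsucc (D : Finset (V × V)) (i : V) :
    dualRobustness D i ≤ #(dsucc D i) := by
  have := dualRobustness_le_card_sub (filter_subset _ D) (not_isMiddleman_filter_fst_ne D i)
  rw [card_filter_fst_ne] at this
  omega

lemma dualRobustness_le_card_dpred (D : Finset (V × V)) (i : V) :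
    dualRobustness D i ≤ #(dpred D i) := by
  have := dualRobustness_le_card_sub (filter_subset _ D) (not_isMiddleman_filter_snd_ne D i)
  rw [card_filter_snd_ne] at this
  omega

end DualRobustness

theorem statement15_general {V : Type*} [Fintype V] [DecidableEq V] (D : Finset (V × V))
    (i : V) (hm : IsMiddleman D i) :
    1 ≤ dualRobustness D i ∧
      dualRobustness D i ≤ min (dsucc D i).card (dpred D i).card :=
  ⟨hm.one_le_dualRobustness,
    le_min (dualRobustness_le_card_dsucc D i) (dualRobustness_le_card_dpred D i)⟩

/-- For every middleman `i`, `1 ≤ ρ*_i(D) ≤ min{d⁺_i, d⁻_i}`. -/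
theorem statement15 {V : Type*} [Fintype V] [DecidableEq V] (D : Finset (V × V))
    (hirr : IrreflArcs D) (i : V) (hm : IsMiddleman D i) :
    1 ≤ dualRobustness D i ∧
      dualRobustness D i ≤ min (dsucc D i).card (dpred D i).card :=
  statement15_general D i hm
end
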